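/- Let T be a forest of order at least 3 such that m(T) ≥ m(T') for every forest T' of the same order. Then T is connected, i.e., T is a tree. -/

import Mathlib

namespace PaperMM

open SimpleGraph

/-- `M` is a matching of `G`: a set of edges of `G` that are pairwise disjoint. -/
def IsMatchingSet {V : Type} (G : SimpleGraph V) (M : Set (Sym2 V)) : Prop :=
  M ⊆ G.edgeSet ∧ M.Pairwise fun e f => ∀ v : V, ¬(v ∈ e ∧ v ∈ f)

/-- The matching number `μ(G)`: the maximum cardinality of a matching of `G`. -/
noncomputable def matchNum {V : Type} (G : SimpleGraph V) : ℕ :=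
  sSup {n | ∃ M : Set (Sym2 V), IsMatchingSet G M ∧ M.ncard = n}

/-- The set of maximum matchings of `G`. -/
def MaximumMatchings {V : Type} (G : SimpleGraph V) : Set (Set (Sym2 V)) :=
  {M | IsMatchingSet G M ∧ M.ncard = matchNum G}

/-- `m(G)`: the number of maximum matchings of `G`. -/
noncomputable def mm {V : Type} (G : SimpleGraph V) : ℕ := (MaximumMatchings G).ncard

/-- The matching `M` covers the vertex `v`. -/
def Covers {V : Type} (M : Set (Sym2 V)) (v : V) : Prop := ∃ e ∈ M, v ∈ e

/-- `v` is of type A in `G`: some maximum matching of `G` does not cover `v`. -/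
def TypeA {V : Type} (G : SimpleGraph V) (v : V) : Prop :=
  ∃ M ∈ MaximumMatchings G, ¬ Covers M v

/-- `v` is of type B in `G`: every maximum matching of `G` covers `v`. -/
def TypeB {V : Type} (G : SimpleGraph V) (v : V) : Prop := ¬ TypeA G v

/-- `G` has a perfect matching. -/
def HasPerfectMatching {V : Type} (G : SimpleGraph V) : Prop :=
  ∃ M : Set (Sym2 V), IsMatchingSet G M ∧ ∀ v, Covers M v

/-- The degree of `v` in `G`. -/
noncomputable def degS {V : Type} (G : SimpleGraph V) (v : V) : ℕ := (G.neighborSet v).ncard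

/-- `G` is an optimal tree: a tree maximising `m` among all trees of the same order. -/
def OptimalTree {V : Type} [Fintype V] (G : SimpleGraph V) : Prop :=
  G.IsTree ∧ ∀ H : SimpleGraph (Fin (Fintype.card V)), H.IsTree → mm H ≤ mm G

/-- The vertex set of the connected component of `s` in `G - st`. -/
def sideSet {V : Type} (G : SimpleGraph V) (s t : V) : Set V :=
  {v | (G.deleteEdges {Sym2.mk s t}).Reachable s v}

/-- The connected component of `s` in `G - st`, as a graph. -/
def sideGraph {V : Type} (G : SimpleGraph V) (s t : V) :
    SimpleGraph (sideSet G s t) :=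
  (G.deleteEdges {Sym2.mk s t}).induce (sideSet G s t)

theorem mem_sideSet_self {V : Type} (G : SimpleGraph V) (s t : V) : s ∈ sideSet G s t :=
  SimpleGraph.Reachable.refl s

/-- The root of the component of `s` in `G - st`, i.e. `s` itself. -/
def sideRoot {V : Type} (G : SimpleGraph V) (s t : V) : sideSet G s t :=
  ⟨s, mem_sideSet_self G s t⟩

/-- `μ(T_s)` where `T_s` is the component of `s` in `G - st`. -/
noncomputable def sideMu {V : Type} (G : SimpleGraph V) (s t : V) : ℕ := matchNum (sideGraph G s t)

/-- `m(T_s)` where `T_s` is the component of `s` in `G - st`. -/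
noncomputable def sideM {V : Type} (G : SimpleGraph V) (s t : V) : ℕ := mm (sideGraph G s t)

/-- `μ(T_s − s)` where `T_s` is the component of `s` in `G - st`. -/
noncomputable def sideMuDel {V : Type} (G : SimpleGraph V) (s t : V) : ℕ :=
  matchNum ((G.deleteEdges {Sym2.mk s t}).induce (sideSet G s t \ {s}))

/-- `m(T_s − s)` where `T_s` is the component of `s` in `G - st`. -/
noncomputable def sideMDel {V : Type} (G : SimpleGraph V) (s t : V) : ℕ :=
  mm ((G.deleteEdges {Sym2.mk s t}).induce (sideSet G s t \ {s}))

/-- A rooted graph: a vertex type, a graph on it, and a root vertex. -/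
structure RGraph : Type 1 where
  V : Type
  G : SimpleGraph V
  root : V

/-- `m(T)` for a rooted graph. -/
noncomputable def RGraph.m (T : RGraph) : ℕ := mm T.G

/-- `m_0(T) = m(T − r)` for a rooted graph with root `r`. -/
noncomputable def RGraph.m0 (T : RGraph) : ℕ := mm (T.G.induce {v | v ≠ T.root})

/-- `m_1(T)`: the number of maximum matchings of `G` covering `r`. -/
noncomputable def mmCover {V : Type} (G : SimpleGraph V) (r : V) : ℕ :=
  {M | M ∈ MaximumMatchings G ∧ Covers M r}.ncard

/-- The order (number of vertices) of a rooted graph. -/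
noncomputable def RGraph.order (T : RGraph) : ℕ := Nat.card T.V

/-- Isomorphism of rooted graphs: a graph isomorphism mapping root to root. -/
def RGraph.RIso (T T' : RGraph) : Prop :=
  ∃ φ : T.G ≃g T'.G, φ T.root = T'.root

/-- The one-vertex rooted tree `L`. -/
def rL : RGraph := ⟨PUnit, ⊥, PUnit.unit⟩

/-- The fork `F`: the root `0` is adjacent to `1`, which is adjacent to the leaves `2`, `3`. -/
def rF : RGraph :=
  ⟨Fin 4, SimpleGraph.fromRel (fun a b => (a = 0 ∧ b = 1) ∨ (a = 1 ∧ b = 2) ∨ (a = 1 ∧ b = 3)), 0⟩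

/-- The rooted tree `B₂*`: a single edge rooted at one endpoint. -/
def rB2 : RGraph := ⟨Fin 2, SimpleGraph.fromRel (fun a b => a = 0 ∧ b = 1), 0⟩

/-- The rooted tree `A₃*`: a path on three vertices rooted at an endpoint. -/
def rA3 : RGraph :=
  ⟨Fin 3, SimpleGraph.fromRel (fun a b => (a = 0 ∧ b = 1) ∨ (a = 1 ∧ b = 2)), 0⟩

/-- The `k`-claw: the star `K_{1,k}` rooted at its center. -/
def claw (k : ℕ) : RGraph :=
  ⟨Fin (k + 1), SimpleGraph.fromRel (fun a b => a = 0 ∧ b ≠ 0), 0⟩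

/-- The chain construction `C`: seven new vertices are added to the rooted tree `T`;
`Sum.inr 0` is the new root `s`, `Sum.inr 1` is the vertex `b` adjacent to `s`, to the new
leaf `Sum.inr 2`, to the root `Sum.inr 3` of a new fork (with center `Sum.inr 4` and leaves
`Sum.inr 5`, `Sum.inr 6`), and to the old root of `T`. -/
def consC (T : RGraph) : RGraph where
  V := T.V ⊕ Fin 7
  G := SimpleGraph.fromRel (fun a b =>
    (∃ x y, T.G.Adj x y ∧ a = Sum.inl x ∧ b = Sum.inl y) ∨
    (a = Sum.inr 0 ∧ b = Sum.inr 1) ∨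
    (a = Sum.inr 1 ∧ b = Sum.inr 2) ∨
    (a = Sum.inr 1 ∧ b = Sum.inr 3) ∨
    (a = Sum.inr 3 ∧ b = Sum.inr 4) ∨
    (a = Sum.inr 4 ∧ b = Sum.inr 5) ∨
    (a = Sum.inr 4 ∧ b = Sum.inr 6) ∨
    (a = Sum.inr 1 ∧ b = Sum.inl T.root))
  root := Sum.inr 0

/-- `hang T S`: the disjoint union of rooted graphs `T` and `S` together with an edge
joining their roots; the root of the result is the root of `T`. -/
def hang (T S : RGraph) : RGraph where
  V := T.V ⊕ S.V
  G := SimpleGraph.fromRel (fun a b =>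
    (∃ x y, T.G.Adj x y ∧ a = Sum.inl x ∧ b = Sum.inl y) ∨
    (∃ x y, S.G.Adj x y ∧ a = Sum.inr x ∧ b = Sum.inr y) ∨
    (a = Sum.inl T.root ∧ b = Sum.inr S.root))
  root := Sum.inl T.root

/-- The rooted subtree of `G` cut off by the edge `st` on the side of `s`, rooted at `s`. -/
def sideRG {V : Type} (G : SimpleGraph V) (s t : V) : RGraph :=
  ⟨sideSet G s t, sideGraph G s t, sideRoot G s t⟩

/-- `y` lies on the path from `x` to the root of `T`. -/
def OnRootPath (T : RGraph) (x y : T.V) : Prop := ∀ p : T.G.Walk x T.root, y ∈ p.support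

/-- The rooted graph `T` contains a `k`-claw: either `T` itself is a `k`-claw, or
there is an edge `xy` of `T` with `y` on the path from `x` to the root such that
the component of `x` in `T − xy`, rooted at `x`, is a `k`-claw. -/
def ContainsClaw (T : RGraph) (k : ℕ) : Prop :=
  T.RIso (claw k) ∨
  ∃ x y : T.V, T.G.Adj x y ∧ OnRootPath T x y ∧ (sideRG T.G x y).RIso (claw k)

/-- The vertex set of the branch of the rooted graph `(G, r)` containing the
neighbour `x` of `r`: all vertices reachable from `x` avoiding `r`. -/
def branchSet {V : Type} (G : SimpleGraph V) (r x : V) : Set V :=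
  {v | ∃ p : G.Walk x v, r ∉ p.support}

/-- `m` of the branch of `(G, r)` at the neighbour `x`. -/
noncomputable def branchM {V : Type} (G : SimpleGraph V) (r x : V) : ℕ :=
  mm (G.induce (branchSet G r x))

/-- `m_0` of the branch of `(G, r)` at the neighbour `x` (the branch is rooted at `x`). -/
noncomputable def branchM0 {V : Type} (G : SimpleGraph V) (r x : V) : ℕ :=
  mm (G.induce (branchSet G r x \ {x}))

/-- The branch of `(G, r)` at the neighbour `x`, rooted at `x`, is of type A. -/
def BranchTypeA {V : Type} (G : SimpleGraph V) (r x : V) : Prop :=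
  ∃ h : x ∈ branchSet G r x, TypeA (G.induce (branchSet G r x)) ⟨x, h⟩

/-- The branch of `(G, r)` at the neighbour `x`, rooted at `x`, is of type B. -/
def BranchTypeB {V : Type} (G : SimpleGraph V) (r x : V) : Prop :=
  ∃ h : x ∈ branchSet G r x, TypeB (G.induce (branchSet G r x)) ⟨x, h⟩

/-- The bipartition condition for rooted trees: a one-vertex rooted tree fulfils it,
and a rooted tree fulfils it if all of its branches (each rooted at the corresponding
neighbour of the root) fulfil it and have type different from the type of the root. -/
inductive BipCond : {V : Type} → SimpleGraph V → V → Prop where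
  | single {V : Type} (G : SimpleGraph V) (r : V) (h : ∀ v : V, v = r) : BipCond G r
  | node {V : Type} (G : SimpleGraph V) (r : V)
      (hrec : ∀ (x : V), G.Adj r x → ∀ (hm : x ∈ branchSet G r x),
        BipCond (G.induce (branchSet G r x)) ⟨x, hm⟩)
      (htype : ∀ (x : V), G.Adj r x → ∀ (hm : x ∈ branchSet G r x),
        ¬ (TypeA G r ↔ TypeA (G.induce (branchSet G r x)) ⟨x, hm⟩)) :
      BipCond G r

/-- The integer sequence `G_j` with `G_0 = 0`, `G_1 = 1`, `G_{j+2} = 11 G_{j+1} − 9 G_j`. -/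
def Gseq : ℕ → ℤ
  | 0 => 0
  | 1 => 1
  | (n + 2) => 11 * Gseq (n + 1) - 9 * Gseq n

/-- Attach one new pendant vertex to the vertex `w` of `H`. -/
def addLeaf {W : Type} (H : SimpleGraph W) (w : W) : SimpleGraph (W ⊕ Unit) :=
  SimpleGraph.fromRel (fun a b =>
    (∃ x y, H.Adj x y ∧ a = Sum.inl x ∧ b = Sum.inl y) ∨
    (a = Sum.inl w ∧ b = Sum.inr ()))

/-- The 6-vertex spider with legs of lengths 1, 1 and 3 attached to the center `0`. -/
def spider6 : SimpleGraph (Fin 6) :=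
  SimpleGraph.fromRel (fun a b =>
    (a = 0 ∧ b = 1) ∨ (a = 0 ∧ b = 2) ∨ (a = 0 ∧ b = 3) ∨ (a = 3 ∧ b = 4) ∨ (a = 4 ∧ b = 5))

/-!
Suppose the forest `G` is disconnected. If a vertex `u` covered by every maximum matching
(type B) and a vertex `v` missed by some maximum matching (type A) lie in different components,
then `G + uv` is still a forest with the same matching number, every maximum matching of `G` is
still maximum, and swapping the matched edge at `u` for `uv` in a maximum matching missing `v`
gives a new one; so `m` increases. Such a pair exists as soon as `G` has an edge and a vertex of
type A, since the neighbour of a leaf is of type B. Otherwise all maximum matchings of `G` cover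
the same vertices, which in a forest forces `m(G) = 1`, whereas a star on at least three
vertices has `m ≥ 2`.
-/

section Matchings

variable {V : Type} {G : SimpleGraph V} {M M' : Set (Sym2 V)}

lemma isMatchingSet_empty (G : SimpleGraph V) : IsMatchingSet G ∅ :=
  ⟨Set.empty_subset _, Set.pairwise_empty _⟩

lemma bddAbove_matchingSizes [Finite V] (G : SimpleGraph V) :
    BddAbove {n | ∃ M : Set (Sym2 V), IsMatchingSet G M ∧ M.ncard = n} := by
  refine ⟨G.edgeSet.ncard, ?_⟩
  rintro n ⟨M, hM, rfl⟩
  exact Set.ncard_le_ncard hM.1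

lemma IsMatchingSet.ncard_le_matchNum [Finite V] (hM : IsMatchingSet G M) :
    M.ncard ≤ matchNum G :=
  le_csSup (bddAbove_matchingSizes G) ⟨M, hM, rfl⟩

lemma exists_mem_maximumMatchings [Finite V] (G : SimpleGraph V) :
    ∃ M, M ∈ MaximumMatchings G := by
  have hne : {n | ∃ M : Set (Sym2 V), IsMatchingSet G M ∧ M.ncard = n}.Nonempty :=
    ⟨0, ∅, isMatchingSet_empty G, Set.ncard_empty _⟩
  obtain ⟨M, hM, hcard⟩ := Nat.sSup_mem hne (bddAbove_matchingSizes G)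
  exact ⟨M, hM, hcard⟩

lemma IsMatchingSet.eq_of_mem_of_mem (hM : IsMatchingSet G M) {e f : Sym2 V} (he : e ∈ M)
    (hf : f ∈ M) {v : V} (hve : v ∈ e) (hvf : v ∈ f) : e = f := by
  by_contra hne
  exact hM.2 he hf hne v ⟨hve, hvf⟩

lemma IsMatchingSet.exists_adj_of_covers (hM : IsMatchingSet G M) {v : V} (hv : Covers M v) :
    ∃ w, s(v, w) ∈ M ∧ G.Adj v w := by
  obtain ⟨e, he, hve⟩ := hv
  obtain ⟨w, rfl⟩ := Sym2.mem_iff_exists.1 hve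
  exact ⟨w, he, hM.1 he⟩

lemma IsMatchingSet.not_covers_sdiff_singleton (hM : IsMatchingSet G M) {e : Sym2 V}
    (he : e ∈ M) {v : V} (hve : v ∈ e) : ¬ Covers (M \ {e}) v := by
  rintro ⟨f, ⟨hfM, hfe⟩, hvf⟩
  exact hfe (hM.eq_of_mem_of_mem hfM he hvf hve)

lemma IsMatchingSet.insert (hM : IsMatchingSet G M) {a b : V} (hab : G.Adj a b)
    (ha : ¬ Covers M a) (hb : ¬ Covers M b) : IsMatchingSet G (insert s(a, b) M) := by
  refine ⟨Set.insert_subset hab hM.1, hM.2.insert fun f hf _ => ?_⟩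
  have hdisj : ∀ v, v ∈ s(a, b) → v ∉ f := by
    rintro v hv hvf
    rcases Sym2.mem_iff.1 hv with rfl | rfl
    exacts [ha ⟨f, hf, hvf⟩, hb ⟨f, hf, hvf⟩]
  exact ⟨fun v hv => hdisj v hv.1 hv.2, fun v hv => hdisj v hv.2 hv.1⟩

lemma IsMatchingSet.mono (hM : IsMatchingSet G M) {H : SimpleGraph V} (hGH : G ≤ H) :
    IsMatchingSet H M :=
  ⟨hM.1.trans (edgeSet_mono hGH), hM.2⟩

lemma IsMatchingSet.subset (hM : IsMatchingSet G M) (h : M' ⊆ M) : IsMatchingSet G M' :=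
  ⟨h.trans hM.1, hM.2.mono h⟩

lemma matchNum_mono [Finite V] {H : SimpleGraph V} (hGH : G ≤ H) : matchNum G ≤ matchNum H := by
  obtain ⟨M, hM, hcard⟩ := exists_mem_maximumMatchings G
  exact hcard ▸ (hM.mono hGH).ncard_le_matchNum

/-- A maximum matching missing `w` would miss the leaf `ℓ` too, and could be enlarged by `ℓw`. -/
lemma typeB_of_adj_of_forall_adj_eq [Finite V] {ℓ w : V} (hℓw : G.Adj ℓ w)
    (hleaf : ∀ z, G.Adj ℓ z → z = w) : TypeB G w := by
  rintro ⟨M, ⟨hM, hcard⟩, hw⟩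
  have hℓ : ¬ Covers M ℓ := by
    intro hℓ
    obtain ⟨z, hz, hℓz⟩ := hM.exists_adj_of_covers hℓ
    exact hw ⟨_, hz, hleaf z hℓz ▸ Sym2.mem_mk_right ℓ z⟩
  have hnew : s(ℓ, w) ∉ M := fun h => hw ⟨_, h, Sym2.mem_mk_right ℓ w⟩
  have := (hM.insert hℓw hℓ hw).ncard_le_matchNum
  rw [Set.ncard_insert_of_notMem hnew] at this
  omega

end Matchings

section AddEdge

variable {V : Type} {G : SimpleGraph V} {u v : V}

lemma IsMatchingSet.sdiff_singleton_of_sup_edge {N : Set (Sym2 V)}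
    (hN : IsMatchingSet (G ⊔ edge u v) N) : IsMatchingSet G (N \ {s(u, v)}) := by
  refine ⟨fun e ⟨heN, hne⟩ => ?_, hN.2.mono Set.sdiff_subset⟩
  rcases (edgeSet_sup _ _ ▸ hN.1 heN : e ∈ G.edgeSet ∪ (edge u v).edgeSet) with h | h
  · exact h
  · exact absurd (edgeSet_edge_subset h) hne

lemma matchNum_sup_edge [Finite V] (hu : TypeB G u) : matchNum (G ⊔ edge u v) = matchNum G := by
  refine le_antisymm ?_ (matchNum_mono le_sup_left)
  obtain ⟨N, hN, hNcard⟩ := exists_mem_maximumMatchings (G ⊔ edge u v)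
  have hN' := hN.sdiff_singleton_of_sup_edge
  by_contra! hlt
  by_cases he : s(u, v) ∈ N
  · have hmax : N \ {s(u, v)} ∈ MaximumMatchings G := by
      refine ⟨hN', le_antisymm hN'.ncard_le_matchNum ?_⟩
      rw [Set.ncard_sdiff_singleton_of_mem he]
      omega
    exact hu ⟨_, hmax, hN.not_covers_sdiff_singleton he (Sym2.mem_mk_left u v)⟩
  · rw [Set.sdiff_singleton_eq_self he] at hN'
    have := hN'.ncard_le_matchNum
    omega

theorem mm_lt_mm_sup_edge [Finite V] (hnadj : ¬ G.Adj u v) (hu : TypeB G u) (hv : TypeA G v) :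
    mm G < mm (G ⊔ edge u v) := by
  have hnum := matchNum_sup_edge (v := v) hu
  have hsub : MaximumMatchings G ⊆ MaximumMatchings (G ⊔ edge u v) :=
    fun M hM => ⟨hM.1.mono le_sup_left, hnum ▸ hM.2⟩
  obtain ⟨M, hM, hvM⟩ := hv
  obtain ⟨w, huw, -⟩ := hM.1.exists_adj_of_covers (not_not.1 fun h => hu ⟨M, hM, h⟩)
  have huv : u ≠ v := by
    rintro rfl
    exact hvM ⟨_, huw, Sym2.mem_mk_left u w⟩
  set N := insert s(u, v) (M \ {s(u, w)})
  have hN : N ∈ MaximumMatchings (G ⊔ edge u v) := by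
    refine ⟨((hM.1.subset Set.sdiff_subset).mono le_sup_left).insert
      (Or.inr ((edge_adj u v u v).2 ⟨Or.inl ⟨rfl, rfl⟩, huv⟩))
      (hM.1.not_covers_sdiff_singleton huw (Sym2.mem_mk_left u w))
      (fun ⟨e, he, hve⟩ => hvM ⟨e, he.1, hve⟩), ?_⟩
    have hnew : s(u, v) ∉ M \ {s(u, w)} := fun h => hnadj (hM.1.1 h.1)
    have hpos : 0 < M.ncard := (Set.ncard_pos).2 ⟨_, huw⟩
    rw [Set.ncard_insert_of_notMem hnew, Set.ncard_sdiff_singleton_of_mem huw, hnum, ← hM.2]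
    omega
  have hNG : N ∉ MaximumMatchings G := fun h => hnadj (h.1.1 (Set.mem_insert _ _))
  exact Set.ncard_lt_ncard (hsub.ssubset_of_not_subset fun h => hNG (h hN))

end AddEdge

section Forest

variable {V : Type} {G : SimpleGraph V} {M M' : Set (Sym2 V)}

lemma _root_.SimpleGraph.IsAcyclic.exists_leaf_reachable [Finite V] (hG : G.IsAcyclic) {x y : V}
    (hxy : G.Adj x y) :
    ∃ ℓ w, G.Adj ℓ w ∧ (∀ z, G.Adj ℓ z → z = w) ∧ G.Reachable x ℓ := by
  classical
  set C := G.connectedComponentMk x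
  have hxC : x ∈ C.supp := rfl
  have hyC : y ∈ C.supp := C.mem_supp_of_adj_mem_supp hxC hxy
  have : Nontrivial C.supp := ⟨⟨⟨x, hxC⟩, ⟨y, hyC⟩, fun h => hxy.ne (congrArg Subtype.val h)⟩⟩
  have := Fintype.ofFinite V
  obtain ⟨⟨ℓ, hℓ⟩, -, -, hdeg, -⟩ := (hG.isTree_connectedComponent C).exists_ne_and_degree_eq_one
  obtain ⟨⟨w, hw⟩, hℓw, huniq⟩ := degree_eq_one_iff_existsUnique_adj.1 hdeg
  refine ⟨ℓ, w, (C.toSimpleGraph_adj hℓ hw).1 hℓw, fun z hℓz => ?_, C.reachable_of_mem_supp hxC hℓ⟩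
  have hzC := C.mem_supp_of_adj_mem_supp hℓ hℓz
  exact congrArg Subtype.val (huniq ⟨z, hzC⟩ ((C.toSimpleGraph_adj hℓ hzC).2 hℓz))

lemma IsMatchingSet.mem_of_leaf_symmDiff (hM : IsMatchingSet G M) (hM' : IsMatchingSet G M')
    {ℓ w : V} (hℓw : s(ℓ, w) ∈ M) (hℓ : Covers M' ℓ)
    (hleaf : ∀ z, (fromEdgeSet (symmDiff M M')).Adj ℓ z → z = w) : s(ℓ, w) ∈ M' := by
  obtain ⟨z, hz, hℓz⟩ := hM'.exists_adj_of_covers hℓ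
  by_cases hzM : s(ℓ, z) ∈ M
  · rwa [hM.eq_of_mem_of_mem hℓw hzM (Sym2.mem_mk_left ℓ w) (Sym2.mem_mk_left ℓ z)]
  · rwa [← hleaf z ((fromEdgeSet_adj _).2 ⟨Set.mem_symmDiff.2 (Or.inr ⟨hz, hzM⟩), hℓz.ne⟩)]

/-- At a leaf `ℓ` of the symmetric difference both matchings must use the same edge. -/
theorem eq_of_covers_iff_of_isAcyclic [Finite V] (hG : G.IsAcyclic) (hM : IsMatchingSet G M)
    (hM' : IsMatchingSet G M') (hcov : ∀ v, Covers M v ↔ Covers M' v) : M = M' := by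
  by_contra hne
  have hK : (fromEdgeSet (symmDiff M M')).IsAcyclic := by
    refine hG.anti fun a b hab => ?_
    rcases Set.mem_symmDiff.1 ((fromEdgeSet_adj _).1 hab).1 with h | h
    exacts [hM.1 h.1, hM'.1 h.1]
  obtain ⟨e, he⟩ := Set.symmDiff_nonempty.2 hne
  induction e using Sym2.ind with
  | _ a b => ?_
  have hab : a ≠ b := by
    rcases Set.mem_symmDiff.1 he with h | h
    exacts [(hM.1 h.1).ne, (hM'.1 h.1).ne]
  obtain ⟨ℓ, w, hℓw, hleaf, -⟩ := hK.exists_leaf_reachable ((fromEdgeSet_adj _).2 ⟨he, hab⟩)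
  rcases Set.mem_symmDiff.1 ((fromEdgeSet_adj _).1 hℓw).1 with ⟨hM₁, hM'₁⟩ | ⟨hM'₁, hM₁⟩
  · exact hM'₁ (hM.mem_of_leaf_symmDiff hM' hM₁
      ((hcov ℓ).1 ⟨_, hM₁, Sym2.mem_mk_left ℓ w⟩) hleaf)
  · exact hM₁ (hM'.mem_of_leaf_symmDiff hM hM'₁
      ((hcov ℓ).2 ⟨_, hM'₁, Sym2.mem_mk_left ℓ w⟩) (symmDiff_comm M M' ▸ hleaf))

end Forest

section Star

variable {V : Type} [Finite V] {r a b : V}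

lemma matchNum_starGraph (hra : r ≠ a) : matchNum (starGraph r) = 1 := by
  refine le_antisymm ?_ ?_
  · obtain ⟨M, hM, hcard⟩ := exists_mem_maximumMatchings (starGraph r)
    have hr : ∀ e ∈ M, r ∈ e := by
      intro e he
      induction e using Sym2.ind with
      | _ x y =>
        rcases (starGraph_adj.1 (hM.1 he)).2 with rfl | rfl
        exacts [Sym2.mem_mk_left _ _, Sym2.mem_mk_right _ _]
    rw [← hcard]
    exact (Set.ncard_le_one).2 fun e he f hf => hM.eq_of_mem_of_mem he hf (hr e he) (hr f hf)
  · have hM : IsMatchingSet (starGraph r) {s(r, a)} :=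
      ⟨Set.singleton_subset_iff.2 (starGraph_center_adj hra), Set.pairwise_singleton _ _⟩
    simpa using hM.ncard_le_matchNum

lemma two_le_mm_starGraph (hra : r ≠ a) (hrb : r ≠ b) (hab : a ≠ b) : 2 ≤ mm (starGraph r) := by
  have hmax : ∀ {c}, r ≠ c → {s(r, c)} ∈ MaximumMatchings (starGraph r) := fun hrc =>
    ⟨⟨Set.singleton_subset_iff.2 (starGraph_center_adj hrc), Set.pairwise_singleton _ _⟩,
      by rw [Set.ncard_singleton, matchNum_starGraph hra]⟩
  have hne : ({s(r, a)} : Set (Sym2 V)) ≠ {s(r, b)} := fun h =>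
    hab (Sym2.congr_right.1 (Set.singleton_eq_singleton_iff.1 h))
  calc 2 = ({{s(r, a)}, {s(r, b)}} : Set (Set (Sym2 V))).ncard := (Set.ncard_pair hne).symm
    _ ≤ mm (starGraph r) := Set.ncard_le_ncard (Set.pair_subset (hmax hra) (hmax hrb))

end Star

section Iso

variable {V W : Type} {G : SimpleGraph V} {G' : SimpleGraph W}

lemma IsMatchingSet.image_iso (φ : G ≃g G') {M : Set (Sym2 V)} (hM : IsMatchingSet G M) :
    IsMatchingSet G' (Sym2.map φ '' M) := by
  constructor
  · rintro _ ⟨e, he, rfl⟩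
    induction e using Sym2.ind with
    | _ x y => exact φ.map_adj_iff.2 (hM.1 he)
  · rintro _ ⟨e, he, rfl⟩ _ ⟨f, hf, rfl⟩ hne v ⟨hve, hvf⟩
    obtain ⟨x, hx, rfl⟩ := Sym2.mem_map.1 hve
    obtain ⟨y, hy, hxy⟩ := Sym2.mem_map.1 hvf
    obtain rfl := φ.injective hxy
    exact hne (congrArg _ (hM.eq_of_mem_of_mem he hf hx hy))

lemma matchNum_le_of_iso [Finite V] [Finite W] (φ : G ≃g G') : matchNum G ≤ matchNum G' := by
  obtain ⟨M, hM, hcard⟩ := exists_mem_maximumMatchings G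
  rw [← hcard, ← Set.ncard_image_of_injective M (Sym2.map.injective φ.injective)]
  exact (hM.image_iso φ).ncard_le_matchNum

lemma mm_le_of_iso [Finite V] [Finite W] (φ : G ≃g G') : mm G ≤ mm G' := by
  have hinj : Function.Injective (Sym2.map φ) := Sym2.map.injective φ.injective
  have hnum : matchNum G = matchNum G' :=
    le_antisymm (matchNum_le_of_iso φ) (matchNum_le_of_iso φ.symm)
  calc mm G = ((Sym2.map φ '' ·) '' MaximumMatchings G).ncard :=
        (Set.ncard_image_of_injective _ (Set.image_injective.2 hinj)).symm
    _ ≤ mm G' := Set.ncard_le_ncard <| by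
        rintro _ ⟨M, ⟨hM, hcard⟩, rfl⟩
        exact ⟨hM.image_iso φ, by rw [Set.ncard_image_of_injective M hinj, hcard, hnum]⟩

end Iso

section Disconnected

variable {V : Type} {G : SimpleGraph V}

lemma exists_typeB_typeA_not_reachable [Finite V] (hG : G.IsAcyclic) (hdisc : ¬ G.Connected)
    {v a b : V} (hv : TypeA G v) (hab : G.Adj a b) :
    ∃ u v, ¬ G.Reachable u v ∧ TypeB G u ∧ TypeA G v := by
  obtain ⟨x, hx⟩ : ∃ x, ¬ G.Reachable v x := by
    by_contra! h
    exact hdisc ((connected_iff_exists_forall_reachable G).2 ⟨v, h⟩)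
  by_cases hxy : ∃ y, G.Adj x y
  · obtain ⟨y, hxy⟩ := hxy
    obtain ⟨ℓ, w, hℓw, hleaf, hxℓ⟩ := hG.exists_leaf_reachable hxy
    exact ⟨w, v, fun hwv => hx ((hxℓ.trans hℓw.reachable).trans hwv).symm,
      typeB_of_adj_of_forall_adj_eq hℓw hleaf, hv⟩
  · push Not at hxy
    obtain ⟨ℓ, w, hℓw, hleaf, -⟩ := hG.exists_leaf_reachable hab
    obtain ⟨M, hM⟩ := exists_mem_maximumMatchings G
    refine ⟨w, x, fun hwx => ?_, typeB_of_adj_of_forall_adj_eq hℓw hleaf, M, hM, fun hxM => ?_⟩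
    · obtain ⟨p⟩ := hwx.symm
      cases p with
      | nil => exact hxy ℓ hℓw.symm
      | cons h _ => exact hxy _ h
    · obtain ⟨z, -, hz⟩ := hM.1.exists_adj_of_covers hxM
      exact hxy z hz

theorem exists_isAcyclic_mm_lt_of_not_connected [Fintype V] (hG : G.IsAcyclic)
    (h3 : 3 ≤ Fintype.card V) (hdisc : ¬ G.Connected) :
    ∃ H : SimpleGraph V, H.IsAcyclic ∧ mm G < mm H := by
  by_cases hAB : (∃ v, TypeA G v) ∧ ∃ a b, G.Adj a b
  · obtain ⟨⟨v, hv⟩, a, b, hab⟩ := hAB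
    obtain ⟨u, v, hnr, hu, hv⟩ := exists_typeB_typeA_not_reachable hG hdisc hv hab
    exact ⟨_, hG.sup_edge_of_not_reachable hnr,
      mm_lt_mm_sup_edge (fun h => hnr h.reachable) hu hv⟩
  have hcov : ∀ M ∈ MaximumMatchings G, ∀ M' ∈ MaximumMatchings G,
      ∀ v, Covers M v ↔ Covers M' v := by
    intro M hM M' hM' v
    rcases not_and_or.1 hAB with hA | hE
    · have hB : ∀ N ∈ MaximumMatchings G, Covers N v :=
        fun N hN => not_not.1 fun h => hA ⟨v, N, hN, h⟩
      exact iff_of_true (hB M hM) (hB M' hM')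
    · have hB : ∀ N ∈ MaximumMatchings G, ¬ Covers N v := fun N hN h =>
        have ⟨w, _, hvw⟩ := hN.1.exists_adj_of_covers h
        hE ⟨v, w, hvw⟩
      exact iff_of_false (hB M hM) (hB M' hM')
  have hmm : mm G ≤ 1 := (Set.ncard_le_one).2 fun M hM M' hM' =>
    eq_of_covers_iff_of_isAcyclic hG hM.1 hM'.1 (hcov M hM M' hM')
  obtain ⟨r, a, b, hra, hrb, hab⟩ := Fintype.two_lt_card_iff.1 h3
  exact ⟨starGraph r, isAcyclic_starGraph r, hmm.trans_lt (two_le_mm_starGraph hra hrb hab)⟩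

end Disconnected

/-- a forest of order at least 3 which maximises `m` among all forests of
the same order is connected, i.e. a tree. -/
theorem stmt_12 {V : Type} [Fintype V] (G : SimpleGraph V) (hforest : G.IsAcyclic)
    (h3 : 3 ≤ Fintype.card V)
    (hopt : ∀ H : SimpleGraph (Fin (Fintype.card V)), H.IsAcyclic → mm H ≤ mm G) :
    G.Connected := by
  by_contra hdisc
  obtain ⟨H, hH, hlt⟩ := exists_isAcyclic_mm_lt_of_not_connected hforest h3 hdisc
  let φ := H.overFinIso rfl
  have := hopt _ (φ.isAcyclic_iff.1 hH)
  have := mm_le_of_iso φ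
  omega

end PaperMM
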